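/- arXiv:1006.0386 — 5 statements merged into one kernel-verified Lean document; each statement's English description precedes it below -/
import Mathlib

section
/- Any linear (n,k) code C ⊆ F_{q^N}^n with minimum rank distance d satisfies the Singleton-style bound Nk ≤ Nn − (d−1)·max(N,n). -/
/-!
A nonzero codeword vanishing outside a set `S` of coordinates has rank at most `#S`, and one
whose coordinates all lie in a `K`-subspace `W ⊆ L` has rank at most `dim W`. Hence, for
`r = d - 1`, deleting `r` coordinates is an injective `L`-linear map `C → L^(n-r)`, giving
`k ≤ n - r`, and reducing every coordinate modulo an `r`-dimensional `W` is an injective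
`K`-linear map `C → (L/W)^n`, giving `N k ≤ n (N - r)`. Multiplying the first bound by `N`,
the two bounds together are `N k ≤ N n - r · max N n`.
-/

/-- Rank norm of a vector over the base field `K`. -/
noncomputable def rankNorm (K : Type*) {L : Type*} [Field K] [Field L] [Algebra K L]
    {n : ℕ} (x : Fin n → L) : ℕ :=
  Module.finrank K (Submodule.span K (Set.range x))

open Module

namespace rankNorm

variable {K L : Type*} [Field K] [Field L] [Algebra K L] {n : ℕ}

theorem pos_of_ne_zero {x : Fin n → L} (hx : x ≠ 0) : 0 < rankNorm K x := by
  have := FiniteDimensional.span_of_finite K (Set.finite_range x)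
  obtain ⟨i, hi⟩ := Function.ne_iff.mp hx
  refine Submodule.one_le_finrank_iff.mpr fun hbot => hi ?_
  simpa [hbot] using (Submodule.subset_span (Set.mem_range_self i) :
    x i ∈ Submodule.span K (Set.range x))

theorem le_card_of_eq_zero_of_notMem {x : Fin n → L} (S : Finset (Fin n))
    (hx : ∀ i ∉ S, x i = 0) : rankNorm K x ≤ S.card := by
  classical
  have hspan : Submodule.span K (Set.range x) ≤ Submodule.span K (S.image x : Set L) := by
    refine Submodule.span_le.mpr (Set.range_subset_iff.mpr fun i => ?_)
    by_cases hi : i ∈ S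
    · exact Submodule.subset_span (Finset.mem_coe.mpr (Finset.mem_image_of_mem x hi))
    · rw [hx i hi]
      exact Submodule.zero_mem _
  calc rankNorm K x ≤ finrank K (Submodule.span K (S.image x : Set L)) :=
        Submodule.finrank_mono hspan
    _ ≤ (S.image x).card := finrank_span_finset_le_card _
    _ ≤ S.card := Finset.card_image_le

theorem le_finrank_of_forall_mem {x : Fin n → L} (W : Submodule K L) [FiniteDimensional K W]
    (hx : ∀ i, x i ∈ W) : rankNorm K x ≤ finrank K W :=
  Submodule.finrank_mono <| Submodule.span_le.mpr <| Set.range_subset_iff.mpr hx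

end rankNorm

namespace Submodule

variable {K L : Type*} [Field K] [Field L] [Algebra K L] {n r : ℕ}

theorem finrank_add_le_of_lt_rankNorm (C : Submodule L (Fin n → L)) (hr : r ≤ n)
    (hC : ∀ c ∈ C, c ≠ 0 → r < rankNorm K c) : finrank L C + r ≤ n := by
  obtain ⟨S, -, hS⟩ := Finset.exists_subset_card_eq (s := (Finset.univ : Finset (Fin n)))
    (by simpa using hr)
  let puncture : C →ₗ[L] (↥Sᶜ → L) := LinearMap.funLeft L L Subtype.val ∘ₗ C.subtype
  have hinj : Function.Injective puncture := by
    refine (injective_iff_map_eq_zero puncture).mpr fun c hc => ?_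
    by_contra hne
    have hlt := hC c c.2 (by simpa using hne)
    have hle := rankNorm.le_card_of_eq_zero_of_notMem (K := K) (x := (c : Fin n → L)) S
      fun i hi => congr_fun hc ⟨i, Finset.mem_compl.mpr hi⟩
    omega
  have hdim : finrank L (↥Sᶜ → L) = n - r := by simp [hS]
  have := LinearMap.finrank_le_finrank_of_injective hinj
  omega

theorem finrank_mul_finrank_add_le_of_lt_rankNorm [FiniteDimensional K L]
    (C : Submodule L (Fin n → L)) (hr : r ≤ finrank K L)
    (hC : ∀ c ∈ C, c ≠ 0 → r < rankNorm K c) :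
    finrank K L * finrank L C + n * r ≤ n * finrank K L := by
  obtain ⟨v, hv⟩ := exists_linearIndependent_of_le_finrank hr
  let W := span K (Set.range v)
  have hW : finrank K W = r := by simpa using finrank_span_eq_card hv
  let reduce : C →ₗ[K] (Fin n → L ⧸ W) :=
    LinearMap.pi (fun i => W.mkQ ∘ₗ LinearMap.proj i) ∘ₗ C.subtype.restrictScalars K
  have hinj : Function.Injective reduce := by
    refine (injective_iff_map_eq_zero reduce).mpr fun c hc => ?_
    by_contra hne
    have hlt := hC c c.2 (by simpa using hne)
    have hle := rankNorm.le_finrank_of_forall_mem (x := (c : Fin n → L)) W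
      fun i => (Quotient.mk_eq_zero W).mp (congr_fun hc i)
    omega
  have hdom : finrank K C = finrank K L * finrank L C := (finrank_mul_finrank K L C).symm
  have hcod : finrank K (Fin n → L ⧸ W) = n * (finrank K L - r) := by
    rw [finrank_pi_fintype, Finset.sum_const, Finset.card_univ, Fintype.card_fin, smul_eq_mul,
      ← W.finrank_quotient_add_finrank, hW, Nat.add_sub_cancel]
  have := LinearMap.finrank_le_finrank_of_injective hinj
  rw [hdom, hcod] at this
  calc finrank K L * finrank L C + n * r ≤ n * (finrank K L - r) + n * r := by omega
    _ = n * finrank K L := by rw [← Nat.mul_add, Nat.sub_add_cancel hr]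

end Submodule

theorem rank_singleton_bound_general (K L : Type*) [Field K] [Field L] [Fintype L]
    [Algebra K L] (n k d N : ℕ) (hN : Module.finrank K L = N)
    (C : Submodule L (Fin n → L)) (hk : Module.finrank L C = k)
    (hd : IsLeast {r : ℕ | ∃ c ∈ C, c ≠ 0 ∧ rankNorm K c = r} d) :
    (N * k : ℤ) ≤ (N * n : ℤ) - (d - 1 : ℤ) * max N n := by
  obtain ⟨⟨c₀, -, hc₀, rfl⟩, hmin⟩ := hd
  have : FiniteDimensional K L := .of_finite
  have hd_pos : 1 ≤ rankNorm K c₀ := rankNorm.pos_of_ne_zero hc₀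
  have hd_le_n : rankNorm K c₀ ≤ n := (finrank_range_le_card c₀).trans_eq (Fintype.card_fin n)
  have hd_le_N : rankNorm K c₀ ≤ N := hN ▸ Submodule.finrank_le _
  have hC : ∀ c ∈ C, c ≠ 0 → rankNorm K c₀ - 1 < rankNorm K c := fun c hc hne => by
    have := hmin ⟨c, hc, hne, rfl⟩
    omega
  have hPuncture := C.finrank_add_le_of_lt_rankNorm (by omega) hC
  have hReduce := C.finrank_mul_finrank_add_le_of_lt_rankNorm (by omega) hC
  rw [hk] at hPuncture
  rw [hN, hk] at hReduce
  have hPuncture' := Nat.mul_le_mul_left N hPuncture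
  zify [hd_pos] at hPuncture' hReduce
  rcases max_cases N n with ⟨h, -⟩ | ⟨h, -⟩ <;> rw [h] <;> linarith

/-- Singleton-style bound for rank-metric codes:
`N·k ≤ N·n − (d−1)·max(N,n)`. -/
theorem rank_singleton_bound (K L : Type*) [Field K] [Fintype K] [Field L] [Fintype L]
    [Algebra K L] (n k d N : ℕ) (hN : Module.finrank K L = N)
    (C : Submodule L (Fin n → L)) (hk : Module.finrank L C = k)
    (hd : IsLeast {r : ℕ | ∃ c ∈ C, c ≠ 0 ∧ rankNorm K c = r} d) :
    (N * k : ℤ) ≤ (N * n : ℤ) - (d - 1 : ℤ) * max N n :=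
  rank_singleton_bound_general K L n k d N hN C hk hd
end

section
/- For a linear (n,k) code over F_{q^N} with n ≤ N, the minimum rank distance d satisfies d ≤ n − k + 1. -/
/-- If `x` vanishes outside a finite set `s` of coordinates, its rank norm is at most `s.card`. -/
lemma rankNorm_le_of_support_subset (K : Type*) {L : Type*} [Field K] [Field L] [Finite L]
    [Algebra K L] {n : ℕ} (x : Fin n → L) (s : Finset (Fin n))
    (h : ∀ i ∉ s, x i = 0) : rankNorm K x ≤ s.card := by
  classical
  haveI : Module.Finite K L := Module.Finite.of_finite
  haveI : FiniteDimensional K (Fin n → L) := inferInstance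
  set F : Finset L := s.image x with hF
  have hsub : Set.range x ⊆ insert (0 : L) (F : Set L) := by
    rintro y ⟨i, rfl⟩
    by_cases hi : i ∈ s
    · exact Set.mem_insert_iff.2 (Or.inr (Finset.mem_coe.2 (Finset.mem_image.2 ⟨i, hi, rfl⟩)))
    · exact Set.mem_insert_iff.2 (Or.inl (h i hi))
  have hspan : Submodule.span K (Set.range x) ≤ Submodule.span K (F : Set L) :=
    le_trans (Submodule.span_mono hsub) (le_of_eq (Submodule.span_insert_zero))
  calc rankNorm K x ≤ Module.finrank K (Submodule.span K (F : Set L)) :=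
        Submodule.finrank_mono hspan
    _ ≤ F.card := finrank_span_finset_le_card F
    _ ≤ s.card := Finset.card_image_le

/-- for `n ≤ N`, the minimum rank distance satisfies `d ≤ n − k + 1`. -/
theorem rank_singleton_bound_n_le_N (K L : Type*) [Field K] [Fintype K] [Field L] [Fintype L]
    [Algebra K L] (n k d : ℕ) (hn : n ≤ Module.finrank K L)
    (C : Submodule L (Fin n → L)) (hk : Module.finrank L C = k)
    (hd : IsLeast {r : ℕ | ∃ c ∈ C, c ≠ 0 ∧ rankNorm K c = r} d) :
    d ≤ n - k + 1 := by
  classical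
  have hkn : k ≤ n := by
    rw [← hk]
    simpa using (Submodule.finrank_le C).trans_eq (by simp [Module.finrank_pi])
  rcases Nat.eq_zero_or_pos k with hk0 | hk1
  · obtain ⟨c, hcC, hc0, hcr⟩ := hd.1
    have h1 := rankNorm_le_of_support_subset K c Finset.univ (fun i hi => absurd (Finset.mem_univ i) hi)
    simp only [Finset.card_univ, Fintype.card_fin] at h1
    omega
  · -- find a nonzero codeword vanishing on the first k-1 coordinates
    have hmn : k - 1 ≤ n := le_trans (Nat.sub_le _ _) hkn
    haveI : FiniteDimensional L (Fin n → L) := inferInstance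
    set φ : C →ₗ[L] (Fin (k - 1) → L) :=
      (LinearMap.funLeft L L (Fin.castLE hmn)).comp C.subtype with hφ
    have hker : LinearMap.ker φ ≠ ⊥ := by
      apply LinearMap.ker_ne_bot_of_finrank_lt
      rw [hk]
      simp only [Module.finrank_pi, Fintype.card_fin, Module.finrank_self]
      omega
    obtain ⟨v, hv, hv0⟩ := Submodule.exists_mem_ne_zero_of_ne_bot hker
    have hvC : (v : Fin n → L) ∈ C := v.2
    have hvne : (v : Fin n → L) ≠ 0 := by
      simpa [Submodule.coe_eq_zero] using hv0
    have hvanish : ∀ j : Fin (k - 1), (v : Fin n → L) (Fin.castLE hmn j) = 0 := by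
      have h0 := LinearMap.mem_ker.1 hv
      intro j
      have h1 := congrFun h0 j
      simpa [hφ, LinearMap.funLeft] using h1
    -- the set of "late" coordinates
    set s : Finset (Fin n) :=
      Finset.image (fun j : Fin (n - (k - 1)) => (⟨(k - 1) + (j : ℕ), by omega⟩ : Fin n))
        Finset.univ with hs
    have hsupp : ∀ i ∉ s, (v : Fin n → L) i = 0 := by
      intro i hi
      by_contra hne
      apply hi
      have hige : k - 1 ≤ (i : ℕ) := by
        by_contra hlt
        push_neg at hlt
        have h2 := hvanish ⟨(i : ℕ), hlt⟩
        rw [show Fin.castLE hmn ⟨(i : ℕ), hlt⟩ = i from Fin.ext rfl] at h2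
        exact hne h2
      refine Finset.mem_image.2 ⟨⟨(i : ℕ) - (k - 1), by omega⟩, Finset.mem_univ _, ?_⟩
      apply Fin.ext
      simp
      omega
    have hscard : s.card = n - (k - 1) := by
      rw [hs, Finset.card_image_of_injective _ ?_, Finset.card_univ, Fintype.card_fin]
      intro a b hab
      have := congrArg (fun i : Fin n => (i : ℕ)) hab
      simp at this
      exact Fin.ext this
    have hdle : d ≤ rankNorm K (v : Fin n → L) :=
      hd.2 ⟨(v : Fin n → L), hvC, hvne, rfl⟩
    have hrank := rankNorm_le_of_support_subset K (v : Fin n → L) s hsupp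
    omega
end

section
/- Let n ≤ N and let g_1,...,g_n ∈ F_{q^N} be linearly independent over F_q. Then the k × n matrix G_k with entries (G_k)_{i,j} = g_j^{q^{i-1}} (the Frobenius/Moore matrix) has rank k over F_{q^N}, for any 1 ≤ k ≤ n. -/
/-!
A nontrivial `L`-linear relation `∑ cᵢ gⱼ^(qⁱ) = 0` among the first `k` rows says that every `gⱼ`
is a root of the `q`-polynomial `P = ∑ cᵢ X^(qⁱ)`, which is nonzero of degree at most `q^(k-1)`.
Evaluation of `P` is `F_q`-linear, because `x ↦ x^q` is, so `P` vanishes on the whole `F_q`-span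
of the `gⱼ`. That span has `qⁿ > q^(k-1)` elements, too many roots for `P`.
-/

open Polynomial FiniteField Module

namespace Polynomial

section Semiring

variable {R : Type*} [Semiring R] (q : ℕ) {k : ℕ}

noncomputable def qPolynomial (c : Fin k → R) : R[X] :=
  ∑ i, C (c i) * X ^ q ^ (i : ℕ)

theorem eval_qPolynomial (c : Fin k → R) (x : R) :
    (qPolynomial q c).eval x = ∑ i, c i * x ^ q ^ (i : ℕ) := by
  simp [qPolynomial, eval_finsetSum]

theorem natDegree_qPolynomial_le {q : ℕ} (hq : 0 < q) (c : Fin k → R) :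
    (qPolynomial q c).natDegree ≤ q ^ (k - 1) := by
  refine natDegree_sum_le_of_forall_le _ _ fun i _ => ?_
  calc (C (c i) * X ^ q ^ (i : ℕ)).natDegree ≤ q ^ (i : ℕ) := natDegree_C_mul_X_pow_le _ _
    _ ≤ q ^ (k - 1) := Nat.pow_le_pow_right hq (Nat.le_sub_one_of_lt i.isLt)

theorem coeff_qPolynomial_pow {q : ℕ} (hq : 1 < q) (c : Fin k → R) (i : Fin k) :
    (qPolynomial q c).coeff (q ^ (i : ℕ)) = c i := by
  rw [qPolynomial, finsetSum_coeff, Finset.sum_eq_single i]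
  · simp
  · intro j _ hji
    have : q ^ (i : ℕ) ≠ q ^ (j : ℕ) := fun h => hji (Fin.ext (Nat.pow_right_injective hq h).symm)
    simp [coeff_X_pow, this]
  · simp

theorem qPolynomial_ne_zero {q : ℕ} (hq : 1 < q) {c : Fin k → R} (hc : c ≠ 0) :
    qPolynomial q c ≠ 0 := by
  obtain ⟨i, hi⟩ := Function.ne_iff.mp hc
  intro h
  exact hi (by simpa [h] using (coeff_qPolynomial_pow hq c i).symm)

end Semiring

section FiniteField

variable (K : Type*) {L : Type*} [Field K] [Fintype K] [CommRing L] [Algebra K L] {k : ℕ}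

noncomputable def qPolynomialEvalₗ (c : Fin k → L) : L →ₗ[K] L :=
  ∑ i, c i • (frobeniusAlgHom K L ^ (i : ℕ)).toLinearMap

theorem qPolynomialEvalₗ_apply (c : Fin k → L) (x : L) :
    qPolynomialEvalₗ K c x = (qPolynomial (Fintype.card K) c).eval x := by
  simp [qPolynomialEvalₗ, eval_qPolynomial, AlgHom.coe_pow, coe_frobeniusAlgHom, pow_iterate]

theorem eval_qPolynomial_eq_zero_of_mem_span {n : ℕ} {g : Fin n → L} {c : Fin k → L}
    (hg : ∀ j, (qPolynomial (Fintype.card K) c).eval (g j) = 0) {x : L}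
    (hx : x ∈ Submodule.span K (Set.range g)) :
    (qPolynomial (Fintype.card K) c).eval x = 0 := by
  have hle : Submodule.span K (Set.range g) ≤ LinearMap.ker (qPolynomialEvalₗ K c) :=
    Submodule.span_le.mpr <| Set.range_subset_iff.mpr fun j => by
      simp [qPolynomialEvalₗ_apply, hg j]
  simpa [qPolynomialEvalₗ_apply] using hle hx

end FiniteField

end Polynomial

section MooreMatrix

variable (K : Type*) {L : Type*} [Field K] [Fintype K] [CommRing L] [IsDomain L] [Algebra K L]

theorem card_pow_finrank_le_natDegree {P : L[X]} (hP : P ≠ 0) (V : Submodule K L)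
    [Module.Finite K V] (hV : ∀ x ∈ V, P.eval x = 0) :
    Fintype.card K ^ finrank K V ≤ P.natDegree := by
  have hsub : (V : Set L) ⊆ P.rootSet L := fun x hx =>
    mem_rootSet.mpr ⟨hP, by simpa using hV x hx⟩
  calc Fintype.card K ^ finrank K V = Nat.card V := by
        rw [natCard_eq_pow_finrank (K := K), Nat.card_eq_fintype_card]
    _ = (V : Set L).ncard := Nat.card_coe_set_eq _
    _ ≤ (P.rootSet L).ncard := Set.ncard_le_ncard hsub (P.rootSet_finite L)
    _ ≤ P.natDegree := P.ncard_rootSet_le L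

theorem linearIndependent_moore_rows {n k : ℕ} (hkn : k ≤ n) {g : Fin n → L}
    (hg : LinearIndependent K g) :
    LinearIndependent L fun (i : Fin k) (j : Fin n) => g j ^ Fintype.card K ^ (i : ℕ) := by
  set q := Fintype.card K
  have hq : 1 < q := Fintype.one_lt_card
  rw [Fintype.linearIndependent_iff]
  intro c hc
  by_contra hne
  obtain ⟨i, hi⟩ := not_forall.mp hne
  have hP : qPolynomial q c ≠ 0 := qPolynomial_ne_zero hq fun h => hi (congrFun h i)
  have hroots : ∀ j, (qPolynomial q c).eval (g j) = 0 := fun j => by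
    simpa [eval_qPolynomial, Finset.sum_apply] using congrFun hc j
  have : Module.Finite K (Submodule.span K (Set.range g)) := .span_of_finite K (Set.finite_range g)
  have hcard := card_pow_finrank_le_natDegree K hP _
    fun x hx => eval_qPolynomial_eq_zero_of_mem_span K hroots hx
  rw [finrank_span_eq_card hg, Fintype.card_fin] at hcard
  exact (hcard.trans (natDegree_qPolynomial_le (Nat.zero_lt_of_lt hq) c)).not_gt
    (Nat.pow_lt_pow_right hq (by have := i.pos; omega))

end MooreMatrix

theorem moore_matrix_rank_general (K L : Type*) [Field K] [Fintype K] [Field L]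
    [Algebra K L] (n k : ℕ) (hkn : k ≤ n)
    (g : Fin n → L) (hg : LinearIndependent K g) :
    (Matrix.of fun (i : Fin k) (j : Fin n) => g j ^ (Fintype.card K) ^ (i : ℕ)).rank = k := by
  simpa using (linearIndependent_moore_rows K hkn hg).rank_matrix (M := Matrix.of _)

/-- the `k × n` Moore matrix built from `g_1,…,g_n ∈ F_{q^N}` linearly
independent over `F_q` (with `n ≤ N`, `1 ≤ k ≤ n`) has rank `k` over `F_{q^N}`. -/
theorem moore_matrix_rank (K L : Type*) [Field K] [Fintype K] [Field L] [Fintype L]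
    [Algebra K L] (n k : ℕ) (hn : n ≤ Module.finrank K L) (hk1 : 1 ≤ k) (hkn : k ≤ n)
    (g : Fin n → L) (hg : LinearIndependent K g) :
    (Matrix.of fun (i : Fin k) (j : Fin n) => g j ^ (Fintype.card K) ^ (i : ℕ)).rank = k :=
  moore_matrix_rank_general K L n k hkn g hg
end

section
/- Let n ≤ N and g_1,...,g_n ∈ F_{q^N} be linearly independent over F_q. Then the code generated by the k × n Moore matrix G_k (rows (g_j^{q^i})_j for i = 0,...,k−1) has minimum rank distance exactly n − k + 1, i.e., it is an MRD code. -/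
/-! A codeword of the Moore code is `(ψ g₁, …, ψ gₙ)` for the `F_q`-linear map
`ψ x = ∑ aᵢ x^{q^i}`, so its rank is `n - dim (span g ∩ ker ψ)`. The kernel of `ψ` consists of
roots of a nonzero polynomial of degree at most `q^{k-1}`, hence has dimension at most `k - 1`.
Conversely, `k - 1` linear conditions on the `k` coefficients `aᵢ` make `ψ` vanish on
`g₁, …, g_{k-1}`, which gives a codeword of rank exactly `n - k + 1`. -/

open Polynomial Module FiniteField

@[simp]
theorem rankNorm_zero (K : Type*) {L : Type*} [Field K] [Field L] [Algebra K L] (n : ℕ) :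
    rankNorm K (0 : Fin n → L) = 0 := by
  rw [rankNorm, Submodule.span_eq_bot.mpr (by rintro _ ⟨j, rfl⟩; rfl), finrank_bot]

theorem rankNorm_comp_add_finrank_inf_ker {K L : Type*} [Field K] [Field L] [Algebra K L]
    {n : ℕ} {g : Fin n → L} (hg : LinearIndependent K g) (f : L →ₗ[K] L) :
    rankNorm K (f ∘ g) + finrank K ↥(Submodule.span K (Set.range g) ⊓ LinearMap.ker f) = n := by
  set V := Submodule.span K (Set.range g)
  have : FiniteDimensional K V := .span_of_finite K (Set.finite_range g)
  have h := LinearMap.finrank_range_add_finrank_ker (f.domRestrict V)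
  rw [LinearMap.range_domRestrict, LinearMap.ker_domRestrict, ← Submodule.finrank_map_subtype_eq,
    Submodule.map_comap_subtype, finrank_span_eq_card hg, Fintype.card_fin,
    Submodule.map_span] at h
  rwa [rankNorm, Set.range_comp]

section Linearized

variable (K : Type*) {L : Type*} [Field K] [Fintype K] [Field L] {k : ℕ}

noncomputable def linearizedPoly (a : Fin k → L) : L[X] :=
  ∑ i, C (a i) * X ^ Fintype.card K ^ (i : ℕ)

variable {K}

theorem coeff_linearizedPoly (a : Fin k → L) (i : Fin k) :
    (linearizedPoly K a).coeff (Fintype.card K ^ (i : ℕ)) = a i := by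
  have hinj := Nat.pow_right_injective (Fintype.one_lt_card (α := K))
  simp [linearizedPoly, coeff_X_pow, hinj.eq_iff, Fin.val_inj]

theorem linearizedPoly_ne_zero {a : Fin k → L} (ha : a ≠ 0) : linearizedPoly K a ≠ 0 := by
  obtain ⟨i, hi⟩ := Function.ne_iff.mp ha
  intro h
  exact hi (by simpa [h] using (coeff_linearizedPoly (K := K) a i).symm)

theorem natDegree_linearizedPoly_le (a : Fin k → L) :
    (linearizedPoly K a).natDegree ≤ Fintype.card K ^ (k - 1) := by
  refine natDegree_sum_le_of_forall_le _ _ fun i _ => (natDegree_C_mul_le _ _).trans ?_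
  rw [natDegree_X_pow]
  exact Nat.pow_le_pow_right Fintype.card_pos (by omega)

variable (K) [Algebra K L]

noncomputable def linearizedMap (a : Fin k → L) : L →ₗ[K] L :=
  ∑ i, a i • (frobeniusAlgHom K L ^ (i : ℕ)).toLinearMap

variable {K}

theorem linearizedMap_apply (a : Fin k → L) (x : L) :
    linearizedMap K a x = ∑ i, a i * x ^ Fintype.card K ^ (i : ℕ) := by
  simp [linearizedMap, coe_frobeniusAlgHom, pow_iterate]

theorem linearizedMap_apply_eq_eval (a : Fin k → L) (x : L) :
    linearizedMap K a x = (linearizedPoly K a).eval x := by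
  simp [linearizedMap_apply, linearizedPoly, eval_finsetSum]

theorem coe_ker_linearizedMap_subset_roots [DecidableEq L] {a : Fin k → L} (ha : a ≠ 0) :
    (LinearMap.ker (linearizedMap K a) : Set L) ⊆ (linearizedPoly K a).roots.toFinset :=
  fun x hx => by
    rwa [Finset.mem_coe, Multiset.mem_toFinset, mem_roots (linearizedPoly_ne_zero (K := K) ha),
      IsRoot.def, ← linearizedMap_apply_eq_eval]

theorem finite_ker_linearizedMap {a : Fin k → L} (ha : a ≠ 0) :
    Module.Finite K (LinearMap.ker (linearizedMap K a)) := by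
  classical
  have : Finite (LinearMap.ker (linearizedMap K a)) :=
    (Finset.finite_toSet _ |>.subset (coe_ker_linearizedMap_subset_roots ha)).to_subtype
  exact .of_finite

theorem finrank_ker_linearizedMap_le {a : Fin k → L} (ha : a ≠ 0) :
    finrank K (LinearMap.ker (linearizedMap K a)) ≤ k - 1 := by
  classical
  have := finite_ker_linearizedMap (K := K) ha
  have hcard : Fintype.card K ^ finrank K (LinearMap.ker (linearizedMap K a))
      ≤ Fintype.card K ^ (k - 1) :=
    calc _ = (LinearMap.ker (linearizedMap K a) : Set L).ncard := by
          rw [← Nat.card_eq_fintype_card, ← natCard_eq_pow_finrank]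
          exact Nat.card_coe_set_eq _
      _ ≤ (linearizedPoly K a).roots.toFinset.card := by
          simpa using Set.ncard_le_ncard (coe_ker_linearizedMap_subset_roots (K := K) ha)
      _ ≤ (linearizedPoly K a).natDegree := (Multiset.toFinset_card_le _).trans (card_roots' _)
      _ ≤ _ := natDegree_linearizedPoly_le a
  exact (Nat.pow_le_pow_iff_right Fintype.one_lt_card).mp hcard

theorem finrank_inf_ker_linearizedMap_le (W : Submodule K L) {a : Fin k → L} (ha : a ≠ 0) :
    finrank K ↥(W ⊓ LinearMap.ker (linearizedMap K a)) ≤ k - 1 :=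
  have := finite_ker_linearizedMap (K := K) ha
  (Submodule.finrank_mono inf_le_right).trans (finrank_ker_linearizedMap_le ha)

theorem sum_smul_frobenius_rows {n : ℕ} (a : Fin k → L) (x : Fin n → L) :
    ∑ i, a i • (fun j => x j ^ Fintype.card K ^ (i : ℕ)) = linearizedMap K a ∘ x := by
  ext j
  simp [linearizedMap_apply]

theorem mem_span_frobenius_rows_iff {n : ℕ} (x : Fin n → L) (c : Fin n → L) :
    c ∈ Submodule.span L (Set.range fun (i : Fin k) (j : Fin n) => x j ^ Fintype.card K ^ (i : ℕ))
      ↔ ∃ a : Fin k → L, linearizedMap K a ∘ x = c := by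
  simp_rw [Submodule.mem_span_range_iff_exists_fun, sum_smul_frobenius_rows]

theorem exists_ne_zero_linearizedMap_eq_zero {m : ℕ} (hm : m < k) (x : Fin m → L) :
    ∃ a : Fin k → L, a ≠ 0 ∧ ∀ j, linearizedMap K a (x j) = 0 := by
  have hdep : ¬LinearIndependent L fun (i : Fin k) (j : Fin m) => x j ^ Fintype.card K ^ (i : ℕ) :=
    fun h => absurd (h.fintype_card_le_finrank.trans_lt (by simpa using hm)) (by simp)
  obtain ⟨a, hsum, i, hi⟩ := Fintype.not_linearIndependent_iff.mp hdep
  refine ⟨a, Function.ne_iff.mpr ⟨i, hi⟩, fun j => ?_⟩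
  rw [sum_smul_frobenius_rows] at hsum
  exact congrFun hsum j

theorem sub_pred_le_rankNorm_linearizedMap_comp {n : ℕ} {g : Fin n → L}
    (hg : LinearIndependent K g) {a : Fin k → L} (ha : a ≠ 0) :
    n - (k - 1) ≤ rankNorm K (linearizedMap K a ∘ g) := by
  have hker := finrank_inf_ker_linearizedMap_le (Submodule.span K (Set.range g)) ha
  have hrank := rankNorm_comp_add_finrank_inf_ker hg (linearizedMap K a)
  omega

theorem exists_rankNorm_linearizedMap_comp_eq {n : ℕ} {g : Fin n → L}
    (hg : LinearIndependent K g) (hk : 1 ≤ k) (hkn : k ≤ n) :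
    ∃ a : Fin k → L, a ≠ 0 ∧ rankNorm K (linearizedMap K a ∘ g) = n - k + 1 := by
  have hle : k - 1 ≤ n := by omega
  obtain ⟨a, ha, hzero⟩ :=
    exists_ne_zero_linearizedMap_eq_zero (K := K) (by omega : k - 1 < k) (g ∘ Fin.castLE hle)
  have hrank := rankNorm_comp_add_finrank_inf_ker hg (linearizedMap K a)
  have hlower := sub_pred_le_rankNorm_linearizedMap_comp hg ha
  set V := Submodule.span K (Set.range g)
  have : FiniteDimensional K V := .span_of_finite K (Set.finite_range g)
  have hsub : Submodule.span K (Set.range (g ∘ Fin.castLE hle)) ≤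
      V ⊓ LinearMap.ker (linearizedMap K a) :=
    le_inf (Submodule.span_mono (Set.range_comp_subset_range _ _))
      (Submodule.span_le.mpr (by rintro _ ⟨j, rfl⟩; exact hzero j))
  have hker : k - 1 ≤ finrank K ↥(V ⊓ LinearMap.ker (linearizedMap K a)) := by
    simpa [finrank_span_eq_card (hg.comp _ (Fin.castLE_injective hle))] using
      Submodule.finrank_mono hsub
  exact ⟨a, ha, by omega⟩

end Linearized

theorem moore_code_is_MRD_general (K L : Type*) [Field K] [Fintype K] [Field L]
    [Algebra K L] (n k : ℕ) (hk1 : 1 ≤ k) (hkn : k ≤ n)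
    (g : Fin n → L) (hg : LinearIndependent K g) :
    IsLeast {r : ℕ | ∃ c ∈ Submodule.span L
        (Set.range fun (i : Fin k) => fun (j : Fin n) => g j ^ (Fintype.card K) ^ (i : ℕ)),
      c ≠ 0 ∧ rankNorm K c = r} (n - k + 1) := by
  constructor
  · obtain ⟨a, ha, hrank⟩ := exists_rankNorm_linearizedMap_comp_eq hg hk1 hkn
    refine ⟨_, (mem_span_frobenius_rows_iff g _).mpr ⟨a, rfl⟩, fun h0 => ?_, hrank⟩
    rw [h0, rankNorm_zero] at hrank
    omega
  · rintro _ ⟨c, hc, hc0, rfl⟩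
    obtain ⟨a, rfl⟩ := (mem_span_frobenius_rows_iff g c).mp hc
    have ha : a ≠ 0 := by
      rintro rfl
      exact hc0 (funext fun j => by simp [linearizedMap_apply])
    have := sub_pred_le_rankNorm_linearizedMap_comp hg ha
    omega

/-- the code generated by the `k × n` Moore matrix is MRD: its minimum
rank distance is exactly `n − k + 1`. -/
theorem moore_code_is_MRD (K L : Type*) [Field K] [Fintype K] [Field L] [Fintype L]
    [Algebra K L] (n k : ℕ) (hn : n ≤ Module.finrank K L) (hk1 : 1 ≤ k) (hkn : k ≤ n)
    (g : Fin n → L) (hg : LinearIndependent K g) :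
    IsLeast {r : ℕ | ∃ c ∈ Submodule.span L
        (Set.range fun (i : Fin k) => fun (j : Fin n) => g j ^ (Fintype.card K) ^ (i : ℕ)),
      c ≠ 0 ∧ rankNorm K c = r} (n - k + 1) :=
  moore_code_is_MRD_general K L n k hk1 hkn g hg
end

section
/- With Y_ext = [Y; σ(Y); ...; σ^{u-1}(Y)], the rank of Y_ext over F_{q^N} is at most the column rank of Y over F_q. -/
/-!
Every entry map `x ↦ x ^ q ^ i` is an `F_q`-linear endomorphism of `F_{q^N}` (a power of
the Frobenius), so stacking its powers gives an `F_q`-linear map `Φ` sending each column of `Y`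
to the corresponding column of `Y_ext`. The columns of `Y_ext` therefore lie in the
`F_{q^N}`-span of `Φ` applied to an `F_q`-basis of the column space of `Y`, and a spanning set
of that size bounds the rank.
-/

open Module Submodule

theorem finrank_span_image_le_finrank_span {K L M N : Type*} [Field K] [Field L] [Algebra K L]
    [AddCommGroup M] [Module K M] [AddCommGroup N] [Module K N] [Module L N]
    [IsScalarTower K L N] (φ : M →ₗ[K] N) (s : Set M) [Module.Finite K (span K s)] :
    finrank L (span L (φ '' s)) ≤ finrank K (span K s) := by
  let b := Module.finBasis K (span K s)
  have hspan_K : span K (Set.range ((↑) ∘ b : _ → M)) = span K s := by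
    rw [Set.range_comp, ← coe_subtype, ← map_span, b.span_eq, Submodule.map_top,
      range_subtype]
  have hspan_L : span L (φ '' s) = span L (Set.range (φ ∘ (↑) ∘ b)) := by
    rw [← span_span_of_tower K L (φ '' s), ← map_span]
    conv_lhs => rw [← hspan_K]
    rw [map_span, ← Set.range_comp, span_span_of_tower]
  calc finrank L (span L (φ '' s))
      = finrank L (span L (Set.range (φ ∘ (↑) ∘ b))) := by rw [hspan_L]
    _ ≤ Fintype.card (Fin (finrank K (span K s))) := finrank_range_le_card _
    _ = finrank K (span K s) := Fintype.card_fin _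

namespace FiniteField

variable (K L : Type*) [Field K] [Fintype K] [CommRing L] [Algebra K L]

theorem frobeniusAlgHom_pow_apply (n : ℕ) (x : L) :
    (frobeniusAlgHom K L ^ n) x = x ^ Fintype.card K ^ n := by
  induction n with
  | zero => simp
  | succ n ih =>
    rw [pow_succ', AlgHom.mul_apply, ih, frobeniusAlgHom_apply, ← pow_mul, ← pow_succ]

noncomputable def frobeniusStack (ι : Type*) (u : ℕ) : (ι → L) →ₗ[K] (Fin u × ι → L) :=
  LinearMap.pi fun p => (frobeniusAlgHom K L ^ (p.1 : ℕ)).toLinearMap ∘ₗ LinearMap.proj p.2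

theorem frobeniusStack_apply {ι : Type*} (u : ℕ) (v : ι → L) (p : Fin u × ι) :
    frobeniusStack K L ι u v p = v p.2 ^ Fintype.card K ^ (p.1 : ℕ) :=
  frobeniusAlgHom_pow_apply K L _ _

end FiniteField

theorem rank_ext_le_colRank_general (K L : Type*) [Field K] [Fintype K] [Field L]
    [Algebra K L] (m t u : ℕ) (Y : Matrix (Fin m) (Fin t) L) :
    (Matrix.of fun (p : Fin u × Fin m) (j : Fin t) =>
        Y p.2 j ^ (Fintype.card K) ^ (p.1 : ℕ)).rank
      ≤ Module.finrank K (Submodule.span K (Set.range Y.transpose)) := by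
  have : Module.Finite K (span K (Set.range Y.transpose)) :=
    FiniteDimensional.span_of_finite K (Set.finite_range _)
  have hcols : Set.range (Matrix.of fun (p : Fin u × Fin m) (j : Fin t) =>
        Y p.2 j ^ (Fintype.card K) ^ (p.1 : ℕ)).col
      = FiniteField.frobeniusStack K L (Fin m) u '' Set.range Y.transpose := by
    refine Eq.trans ?_ (Set.range_comp _ Y.transpose)
    congr 1
    funext j p
    exact (FiniteField.frobeniusStack_apply K L u (Y.transpose j) p).symm
  rw [Matrix.rank_eq_finrank_span_cols, hcols]
  exact finrank_span_image_le_finrank_span _ _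

/-- the rank of `Y_ext = [Y; σ(Y); …; σ^{u−1}(Y)]` over `F_{q^N}` is at most
the column rank of `Y` over `F_q`. -/
theorem rank_ext_le_colRank (K L : Type*) [Field K] [Fintype K] [Field L] [Fintype L]
    [Algebra K L] (m t u : ℕ) (Y : Matrix (Fin m) (Fin t) L) :
    (Matrix.of fun (p : Fin u × Fin m) (j : Fin t) =>
        Y p.2 j ^ (Fintype.card K) ^ (p.1 : ℕ)).rank
      ≤ Module.finrank K (Submodule.span K (Set.range Y.transpose)) :=
  rank_ext_le_colRank_general K L m t u Y
end
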